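/- Let G be a group with elements g₁,…,g₅ and integers t_{ijk} (1 ≤ i < j < k ≤ 5) satisfying the listed commutator relations. Then for all integers x, y: g₃^x g₁^y = g₁^y g₃^x g₄^{x y t₁₃₄} g₅^{s₂(x) y t₁₃₄ t₃₄₅ + x y t₁₃₅ + x s₂(y) t₁₃₄ t₁₄₅}. -/

import Mathlib

/-!
Conjugation by `g₁` sends `g₃` to `g₃ w` with `w = g₄^t₁₃₄ g₅^t₁₃₅`, and `g₃` conjugates `w` to
`w g₅^(t₁₃₄ t₃₄₅)`. Since `g₅` commutes with `g₁, g₃, g₄`, the identity `(ab)ⁿ = aⁿ bⁿ z^s₂(n)`,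
valid whenever `a⁻¹ b a = b z` with `z` commuting with `a` and `b`, gives `g₁⁻¹ g₃^x g₁ = g₃^x u`
with `u = g₄^(x t₁₃₄) g₅^(…)`. Conjugation by `g₁` multiplies `u` by `z = g₅^(x t₁₃₄ t₁₄₅)`, and the
same identity applied to `u g₁⁻¹` yields `g₁^(-y) g₃^x g₁^y = g₃^x u^y z^s₂(y)`.
-/

def s2 (x : ℤ) : ℤ := x * (x - 1) / 2

theorem s2_add_one (x : ℤ) : s2 (x + 1) = s2 x + x := by
  rw [s2, s2, ← Int.add_mul_ediv_right _ _ two_ne_zero]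
  ring_nf

section

variable {G : Type*} [Group G]

theorem apply_eq_zpow_of_apply_add_one {f : ℤ → G} {c : G} (h0 : f 0 = 1)
    (h : ∀ n, f (n + 1) = f n * c) (n : ℤ) : f n = c ^ n := by
  induction n using Int.induction_on with
  | zero => rw [h0, zpow_zero]
  | succ n ih => rw [h, ih, zpow_add_one]
  | pred n ih => rw [← mul_inv_eq_of_eq_mul (h _), sub_add_cancel, ih, zpow_sub_one]

theorem commute_of_inv_mul_inv_mul_mul_eq_one {a b : G} (h : a⁻¹ * b⁻¹ * a * b = 1) :
    Commute a b := by
  rw [← Commute.inv_inv_iff, ← commutatorElement_eq_one_iff_commute, commutatorElement_def,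
    inv_inv, inv_inv, h]

theorem inv_mul_mul_eq_mul_of_inv_mul_inv_mul_mul_eq {a b c : G}
    (h : a⁻¹ * b⁻¹ * a * b = c) : b⁻¹ * a * b = a * c := by
  rw [← h]; group

theorem inv_mul_zpow_mul (g a : G) (n : ℤ) : g⁻¹ * a ^ n * g = (g⁻¹ * a * g) ^ n := by
  simpa using (conj_zpow (a := g⁻¹) (b := a) (i := n)).symm

theorem inv_mul_zpow_mul_of_commute {a g c : G} (hc : Commute a c) (h : g⁻¹ * a * g = a * c)
    (n : ℤ) : g⁻¹ * a ^ n * g = a ^ n * c ^ n := by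
  rw [inv_mul_zpow_mul, h, hc.mul_zpow]

theorem inv_mul_zpow_mul_zpow_mul {a g z : G} {k : ℤ} (hza : Commute z a) (hzg : Commute z g)
    (h : g⁻¹ * a * g = a * z ^ k) (e f : ℤ) :
    g⁻¹ * (a ^ e * z ^ f) * g = a ^ e * z ^ f * z ^ (e * k) := by
  calc g⁻¹ * (a ^ e * z ^ f) * g = (g⁻¹ * a ^ e * g) * (g⁻¹ * z ^ f * g) := by group
    _ = a ^ e * z ^ f * z ^ (e * k) := by
        rw [inv_mul_zpow_mul_of_commute (hza.zpow_left k).symm h,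
          (hzg.zpow_left f).symm.inv_mul_cancel]
        group

theorem mul_zpow_of_inv_mul_mul_eq {a b z : G} (hza : Commute z a) (hzb : Commute z b)
    (h : a⁻¹ * b * a = b * z) (n : ℤ) : (a * b) ^ n = a ^ n * b ^ n * z ^ s2 n := by
  refine (apply_eq_zpow_of_apply_add_one (f := fun n ↦ a ^ n * b ^ n * z ^ s2 n)
    (by simp [s2]) (fun n ↦ ?_) n).symm
  have hbn : b ^ n * a = a * (b ^ n * z ^ n) := by
    rw [← inv_mul_zpow_mul_of_commute hzb.symm h]; group
  calc a ^ (n + 1) * b ^ (n + 1) * z ^ s2 (n + 1)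
      = a ^ n * a * b ^ n * (b * z ^ n) * z ^ s2 n := by rw [s2_add_one]; group
    _ = a ^ n * (a * (b ^ n * z ^ n)) * b * z ^ s2 n := by rw [← (hzb.zpow_left n).eq]; group
    _ = a ^ n * b ^ n * a * (z ^ s2 n * b) := by rw [← hbn, (hzb.zpow_left _).eq]; group
    _ = a ^ n * b ^ n * z ^ s2 n * (a * b) := by
        rw [mul_assoc _ (z ^ s2 n), ← mul_assoc (z ^ s2 n), (hza.zpow_left _).eq]; group

theorem zpow_inv_mul_mul_zpow {a b u z : G} (hzu : Commute z u) (hzb : Commute z b)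
    (ha : b⁻¹ * a * b = a * u) (hu : b⁻¹ * u * b = u * z) (n : ℤ) :
    (b ^ n)⁻¹ * a * b ^ n = a * u ^ n * z ^ s2 n := by
  have ha' : a⁻¹ * b⁻¹ * a = u * b⁻¹ := by
    rw [← inv_mul_cancel_left a u, ← ha]; group
  have hu' : u⁻¹ * b⁻¹ * u = b⁻¹ * z := by
    rw [← hzb.inv_right.eq, ← inv_mul_cancel_left u z, ← hu]; group
  calc (b ^ n)⁻¹ * a * b ^ n = a * (a⁻¹ * b⁻¹ * a) ^ n * b ^ n := by
        rw [← inv_mul_zpow_mul]; group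
    _ = a * u ^ n * ((b⁻¹) ^ n * (z ^ s2 n * b ^ n)) := by
        rw [ha', mul_zpow_of_inv_mul_mul_eq hzu hzb.inv_right hu']; group
    _ = a * u ^ n * z ^ s2 n := by rw [((hzb.zpow_left _).zpow_right n).eq]; group

end

theorem g3_g1_power_commutation_general (G : Type*) [Group G] (g1 g3 g4 g5 : G)
    (t134 t135 t145 t345 : ℤ)
    (h31 : g3⁻¹ * g1⁻¹ * g3 * g1 = g4 ^ t134 * g5 ^ t135)
    (h41 : g4⁻¹ * g1⁻¹ * g4 * g1 = g5 ^ t145)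
    (h43 : g4⁻¹ * g3⁻¹ * g4 * g3 = g5 ^ t345)
    (h51 : g5⁻¹ * g1⁻¹ * g5 * g1 = 1)
    (h53 : g5⁻¹ * g3⁻¹ * g5 * g3 = 1)
    (h54 : g5⁻¹ * g4⁻¹ * g5 * g4 = 1) :
    ∀ x y : ℤ,
      g3 ^ x * g1 ^ y
        = g1 ^ y * g3 ^ x * g4 ^ (x * y * t134)
            * g5 ^ (s2 x * y * t134 * t345 + x * y * t135 + x * s2 y * t134 * t145) := by
  intro x y
  have c51 := commute_of_inv_mul_inv_mul_mul_eq_one h51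
  have c53 := commute_of_inv_mul_inv_mul_mul_eq_one h53
  have c54 := commute_of_inv_mul_inv_mul_mul_eq_one h54
  have c5 (k e f : ℤ) : Commute (g5 ^ k) (g4 ^ e * g5 ^ f) :=
    (c54.zpow_zpow k e).mul_right ((Commute.refl g5).zpow_zpow k f)
  have hw := inv_mul_zpow_mul_zpow_mul c54 c53
    (inv_mul_mul_eq_mul_of_inv_mul_inv_mul_mul_eq h43) t134 t135
  have hx : g1⁻¹ * g3 ^ x * g1
      = g3 ^ x * (g4 ^ (x * t134) * g5 ^ (x * t135 + s2 x * t134 * t345)) := by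
    rw [inv_mul_zpow_mul, inv_mul_mul_eq_mul_of_inv_mul_inv_mul_mul_eq h31,
      mul_zpow_of_inv_mul_mul_eq (c53.zpow_left _) (c5 _ _ _) hw x,
      (c54.zpow_zpow t135 t134).symm.mul_zpow]
    group
  have hu := inv_mul_zpow_mul_zpow_mul c54 c51 (inv_mul_mul_eq_mul_of_inv_mul_inv_mul_mul_eq h41)
    (x * t134) (x * t135 + s2 x * t134 * t345)
  calc g3 ^ x * g1 ^ y = g1 ^ y * ((g1 ^ y)⁻¹ * g3 ^ x * g1 ^ y) := by group
    _ = _ := by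
      rw [zpow_inv_mul_mul_zpow (c5 _ _ _) (c51.zpow_left _) hx hu y,
        (c54.zpow_zpow _ (x * t134)).symm.mul_zpow]
      group

/-- Commutation formula
`g₃^x g₁^y = g₁^y g₃^x g₄^{xy t₁₃₄} g₅^{s₂(x) y t₁₃₄ t₃₄₅ + xy t₁₃₅ + x s₂(y) t₁₃₄ t₁₄₅}`. -/
theorem g3_g1_power_commutation (G : Type*) [Group G] (g1 g2 g3 g4 g5 : G)
    (t123 t124 t125 t134 t135 t145 t234 t235 t245 t345 : ℤ)
    (h21 : g2⁻¹ * g1⁻¹ * g2 * g1 = g3 ^ t123 * g4 ^ t124 * g5 ^ t125)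
    (h31 : g3⁻¹ * g1⁻¹ * g3 * g1 = g4 ^ t134 * g5 ^ t135)
    (h32 : g3⁻¹ * g2⁻¹ * g3 * g2 = g4 ^ t234 * g5 ^ t235)
    (h41 : g4⁻¹ * g1⁻¹ * g4 * g1 = g5 ^ t145)
    (h42 : g4⁻¹ * g2⁻¹ * g4 * g2 = g5 ^ t245)
    (h43 : g4⁻¹ * g3⁻¹ * g4 * g3 = g5 ^ t345)
    (h51 : g5⁻¹ * g1⁻¹ * g5 * g1 = 1)
    (h52 : g5⁻¹ * g2⁻¹ * g5 * g2 = 1)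
    (h53 : g5⁻¹ * g3⁻¹ * g5 * g3 = 1)
    (h54 : g5⁻¹ * g4⁻¹ * g5 * g4 = 1) :
    ∀ x y : ℤ,
      g3 ^ x * g1 ^ y
        = g1 ^ y * g3 ^ x * g4 ^ (x * y * t134)
            * g5 ^ (s2 x * y * t134 * t345 + x * y * t135 + x * s2 y * t134 * t145) :=
  g3_g1_power_commutation_general G g1 g3 g4 g5 t134 t135 t145 t345 h31 h41 h43 h51 h53 h54
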